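/- arXiv:1905.12177 — 4 statements merged into one kernel-verified Lean document; each statement's English description precedes it below -/
import Mathlib

section
/- Let σ : ℝ^d → 𝒫([d]) be a local swap, i.e., for all x, z ∈ ℝ^d, if x and z agree on all coordinates outside σ(x), then σ(x) = σ(z). Then σ can be decomposed into d mappings σ_i : ℝ^d → 𝒫([d]) such that for each i: (a) the image of σ_i is contained in {∅, {i}}, (b) for every x, σ(x) is the disjoint union of the σ_i(x), and (c) each σ_i is itself a local swap. -/
open MeasureTheory
open scoped Classical ENNReal

noncomputable section

/-- Swap the coordinates indexed by `S` between the two components of a pair of vectors. -/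
def swapPair {d : ℕ} (S : Set (Fin d)) (p : (Fin d → ℝ) × (Fin d → ℝ)) :
    (Fin d → ℝ) × (Fin d → ℝ) :=
  (fun i => if i ∈ S then p.2 i else p.1 i, fun i => if i ∈ S then p.1 i else p.2 i)

/-- A swap `σ : ℝ^d → 𝒫([d])` is a *local swap* if whenever `x` and `z` agree on all
coordinates outside `σ x`, then `σ x = σ z`. -/
def IsLocalSwap {d : ℕ} (σ : (Fin d → ℝ) → Set (Fin d)) : Prop :=
  ∀ x z : Fin d → ℝ, (∀ i ∉ σ x, x i = z i) → σ x = σ z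

/-- The swapped mapping `[F, F̃]_{swap(σ)} : (x, x̃) ↦ [(F,F̃)(x,x̃)]_{swap(σ(x))}`. -/
def swapMap {d : ℕ} (σ : (Fin d → ℝ) → Set (Fin d))
    (F : (Fin d → ℝ) × (Fin d → ℝ) → (Fin d → ℝ) × (Fin d → ℝ)) :
    (Fin d → ℝ) × (Fin d → ℝ) → (Fin d → ℝ) × (Fin d → ℝ) :=
  fun p => swapPair (σ p.1) (F p)

/-!
The `i`-th component is `σ_i(x) = σ(x) ∩ {i}`. It is again a local swap: if `i ∈ σ(x)`, then
agreeing off `{i}` implies agreeing off the larger set `σ(x)`, so `σ(x) = σ(z)`; if `i ∉ σ(x)`,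
agreeing off `∅` means `x = z`.
-/

theorem IsLocalSwap.inter_singleton {d : ℕ} {σ : (Fin d → ℝ) → Set (Fin d)}
    (hσ : IsLocalSwap σ) (i : Fin d) : IsLocalSwap (fun x => σ x ∩ {i}) := by
  intro x z hxz
  by_cases hi : i ∈ σ x
  · have hσxz : σ x = σ z :=
      hσ x z fun k hk => hxz k fun hk' => hk (Set.mem_of_mem_inter_left hk')
    simp only [← hσxz]
  · have hxz : x = z := funext fun k => hxz k (by simp [hi])
    rw [hxz]

theorem Set.inter_singleton_eq_empty_or_eq {α : Type*} (s : Set α) (a : α) :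
    s ∩ {a} = ∅ ∨ s ∩ {a} = {a} := by
  by_cases ha : a ∈ s
  · exact .inr (Set.inter_singleton_of_mem ha)
  · exact .inl (Set.inter_singleton_of_notMem ha)

theorem Set.iUnion_inter_singleton {α : Type*} (s : Set α) : ⋃ a, s ∩ {a} = s := by
  rw [← Set.inter_iUnion, Set.iUnion_of_singleton, Set.inter_univ]

/-- A local swap decomposes into singleton-valued local swaps with disjoint union. -/
theorem local_swap_decomposition {d : ℕ} (σ : (Fin d → ℝ) → Set (Fin d))
    (hσ : IsLocalSwap σ) :
    ∃ σi : Fin d → (Fin d → ℝ) → Set (Fin d),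
      (∀ i x, σi i x = ∅ ∨ σi i x = {i}) ∧
      (∀ x, σ x = ⋃ i, σi i x) ∧
      (∀ x, ∀ i j, i ≠ j → Disjoint (σi i x) (σi j x)) ∧
      (∀ i, IsLocalSwap (σi i)) :=
  ⟨fun i x => σ x ∩ {i},
    fun i x => (σ x).inter_singleton_eq_empty_or_eq i,
    fun x => ((σ x).iUnion_inter_singleton).symm,
    fun _ _ _ hij => (Set.disjoint_singleton.mpr hij).inter_left' _ |>.inter_right' _,
    hσ.inter_singleton⟩
end
end

section
/- If σ is a local swap decomposed as a disjoint union σ = σ^a ⊔ σ^b of two local swaps σ^a and σ^b (meaning σ(x) = σ^a(x) ⊔ σ^b(x) for all x), and if z denotes the vector of the first d coordinates of [x, x̃]_{swap(σ^a(x))}, then σ^b(x) = σ^b(z). Consequently, the swapped identity mapping satisfies [F^Id, F̃^Id]_{swap(σ)} = [F^Id, F̃^Id]_{swap(σ^b)} ∘ [F^Id, F̃^Id]_{swap(σ^a)}. -/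
open MeasureTheory
open scoped Classical ENNReal

noncomputable section

theorem swapPair_fst_of_not_mem {d : ℕ} {S : Set (Fin d)} (p : (Fin d → ℝ) × (Fin d → ℝ))
    {i : Fin d} (hi : i ∉ S) : (swapPair S p).1 i = p.1 i := if_neg hi

theorem swapPair_swapPair_of_disjoint {d : ℕ} {S T : Set (Fin d)} (hST : Disjoint S T)
    (p : (Fin d → ℝ) × (Fin d → ℝ)) : swapPair T (swapPair S p) = swapPair (S ∪ T) p := by
  ext i
  all_goals
    by_cases hS : i ∈ S
    · simp [swapPair, hS, Set.disjoint_left.mp hST hS]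
    · simp [swapPair, hS]

theorem IsLocalSwap.apply_swapPair_fst_of_subset {d : ℕ} {σ : (Fin d → ℝ) → Set (Fin d)}
    (hσ : IsLocalSwap σ) {S : Set (Fin d)} (p : (Fin d → ℝ) × (Fin d → ℝ)) (hS : S ⊆ σ p.1) :
    σ (swapPair S p).1 = σ p.1 :=
  (hσ _ _ fun _ hi => (swapPair_fst_of_not_mem p fun h => hi (hS h)).symm).symm

theorem local_swap_iteration_general {d : ℕ}
    (σ σa σb : (Fin d → ℝ) → Set (Fin d))
    (hσ : IsLocalSwap σ) (ha : IsLocalSwap σa)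
    (hdisj : ∀ x, Disjoint (σa x) (σb x))
    (hunion : ∀ x, σ x = σa x ∪ σb x) :
    (∀ x xt : Fin d → ℝ, σb x = σb (swapPair (σa x) (x, xt)).1) ∧
    swapMap σ id = (swapMap σb id) ∘ (swapMap σa id) := by
  have hσb : ∀ x, σb x = σ x \ σa x := fun x => by
    rw [hunion x, Set.union_sdiff_left, (hdisj x).sdiff_eq_right]
  -- The `σa`-swap only moves coordinates in `σa x ⊆ σ x`, so by locality neither `σa` nor `σ`
  -- changes, hence neither does `σb = σ \ σa`.
  have hσb_swap : ∀ x xt : Fin d → ℝ, σb x = σb (swapPair (σa x) (x, xt)).1 := by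
    intro x xt
    have hsub : σa x ⊆ σ x := hunion x ▸ Set.subset_union_left
    rw [hσb, hσb, ha.apply_swapPair_fst_of_subset (x, xt) subset_rfl,
      hσ.apply_swapPair_fst_of_subset (x, xt) hsub]
  refine ⟨hσb_swap, funext fun ⟨x, xt⟩ => ?_⟩
  simp only [Function.comp_apply, swapMap, id]
  rw [← hσb_swap, swapPair_swapPair_of_disjoint (hdisj x), hunion]

/-- If a local swap σ is the disjoint union of two local swaps σa and σb, then σb is
unchanged by the σa-swap of the first component, and the swapped identity mapping for σ
is the composition of the swapped identity mappings for σb and σa. -/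
theorem local_swap_iteration {d : ℕ}
    (σ σa σb : (Fin d → ℝ) → Set (Fin d))
    (hσ : IsLocalSwap σ) (ha : IsLocalSwap σa) (hb : IsLocalSwap σb)
    (hdisj : ∀ x, Disjoint (σa x) (σb x))
    (hunion : ∀ x, σ x = σa x ∪ σb x) :
    (∀ x xt : Fin d → ℝ, σb x = σb (swapPair (σa x) (x, xt)).1) ∧
    swapMap σ id = (swapMap σb id) ∘ (swapMap σa id) :=
  local_swap_iteration_general σ σa σb hσ ha hdisj hunion
end
end

section
/- Let σ be a local swap and r > 0. Define A^r = {z ∈ ℝ^d : σ(z) = σ(y) for all y ∈ B(z, r)} and σ^r(z) = σ(z) if z ∈ A^r and σ^r(z) = ∅ otherwise. Then σ^r is a local swap. Moreover, in the proof, the key step is: if x ∈ A^r and z agrees with x outside σ^r(x), then z ∈ A^r and σ^r(x) = σ^r(z). -/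
open MeasureTheory
open scoped Classical ENNReal

noncomputable section

/-
If `x ∈ A^r` and `z` agrees with `x` off `σ x`, take any `y` in the ball around `z` and splice
`w := x` on `σ x`, `w := y` elsewhere. Then `w` lies in the ball around `x`, so `σ w = σ x`;
`w` agrees with `y` off `σ w`, so locality gives `σ w = σ y`; and locality at `x` gives
`σ x = σ z`. Hence `σ` is constant on the ball around `z`, i.e. `z ∈ A^r`. Off `A^r` the swap
`σ^r` is empty, so agreement off it forces equality.
-/

open Metric

theorem dist_piecewise_le_dist {ι : Type*} [Fintype ι] {β : ι → Type*}
    [∀ i, PseudoMetricSpace (β i)] (S : Set ι) [DecidablePred (· ∈ S)] {x y z : ∀ i, β i}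
    (hxz : ∀ i ∉ S, x i = z i) : dist (S.piecewise x y) x ≤ dist y z := by
  refine (dist_pi_le_iff dist_nonneg).2 fun i => ?_
  by_cases hi : i ∈ S
  · simp only [Set.piecewise_eq_of_mem S x y hi, dist_self, dist_nonneg]
  · rw [Set.piecewise_eq_of_notMem S x y hi, hxz i hi]
    exact dist_le_pi_dist y z i

theorem IsLocalSwap.eqOn_closedBall_of_agree {d : ℕ} {σ : (Fin d → ℝ) → Set (Fin d)}
    (hσ : IsLocalSwap σ) {r : ℝ} {x z : Fin d → ℝ}
    (hx : ∀ y ∈ closedBall x r, σ y = σ x) (hxz : ∀ i ∉ σ x, x i = z i) :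
    ∀ y ∈ closedBall z r, σ y = σ z := by
  intro y hy
  set w := (σ x).piecewise x y
  have hwx : σ w = σ x :=
    hx w (mem_closedBall.2 ((dist_piecewise_le_dist _ hxz).trans (mem_closedBall.1 hy)))
  have hwy : σ w = σ y := hσ w y fun i hi =>
    Set.piecewise_eq_of_notMem _ _ _ (hwx ▸ hi)
  rw [← hwy, hwx, hσ x z hxz]

theorem sigma_r_isLocalSwap_general {d : ℕ}
    (σ : (Fin d → ℝ) → Set (Fin d)) (hσ : IsLocalSwap σ) (r : ℝ)
    (Ar : Set (Fin d → ℝ)) (σr : (Fin d → ℝ) → Set (Fin d))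
    (hAr : Ar = {z | ∀ y ∈ Metric.closedBall z r, σ y = σ z})
    (hσr : ∀ z, σr z = if z ∈ Ar then σ z else ∅) :
    IsLocalSwap σr ∧
    ∀ x z : Fin d → ℝ, x ∈ Ar → (∀ i ∉ σr x, x i = z i) →
      z ∈ Ar ∧ σr x = σr z := by
  have key : ∀ x z : Fin d → ℝ, x ∈ Ar → (∀ i ∉ σr x, x i = z i) →
      z ∈ Ar ∧ σr x = σr z := by
    intro x z hx hxz
    have hσrx : σr x = σ x := by rw [hσr, if_pos hx]
    rw [hσrx] at hxz
    have hz : z ∈ Ar := by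
      subst hAr
      exact hσ.eqOn_closedBall_of_agree hx hxz
    exact ⟨hz, by rw [hσrx, hσr z, if_pos hz, hσ x z hxz]⟩
  refine ⟨fun x z hxz => ?_, key⟩
  by_cases hx : x ∈ Ar
  · exact (key x z hx hxz).2
  · have hσrx : σr x = ∅ := by rw [hσr, if_neg hx]
    obtain rfl : x = z := funext fun i => hxz i (hσrx ▸ Set.notMem_empty i)
    rfl

/-- The restriction σ^r of a local swap σ to the set A^r where σ is locally constant on
r-balls is again a local swap; moreover if x ∈ A^r and z agrees with x outside σ^r(x),
then z ∈ A^r and σ^r(x) = σ^r(z). -/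
theorem sigma_r_isLocalSwap {d : ℕ}
    (σ : (Fin d → ℝ) → Set (Fin d)) (hσ : IsLocalSwap σ) (r : ℝ) (hr : 0 < r)
    (Ar : Set (Fin d → ℝ)) (σr : (Fin d → ℝ) → Set (Fin d))
    (hAr : Ar = {z | ∀ y ∈ Metric.closedBall z r, σ y = σ z})
    (hσr : ∀ z, σr z = if z ∈ Ar then σ z else ∅) :
    IsLocalSwap σr ∧
    ∀ x z : Fin d → ℝ, x ∈ Ar → (∀ i ∉ σr x, x i = z i) →
      z ∈ Ar ∧ σr x = σr z :=
  sigma_r_isLocalSwap_general σ hσ r Ar σr hAr hσr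
end
end

section
/- Single-coordinate swap density identity: let (X, X̃, Y) have positive joint density p with X̃ a knockoff of X (so p(y | x, x̃) = p(y | x) and p(x, x̃) = p([x, x̃]_{swap({1})})), and suppose coordinate 1 is a local null at x (X_1 ⊥ Y | X_{-1} = x_{-1}, so p(y | x) = p(y | x_{-1})). Then the joint density satisfies p(x, x̃, y) = p([x, x̃]_{swap({1})}, y). -/
open MeasureTheory
open scoped Classical ENNReal

noncomputable section

theorem swapPair_singleton_fst {d : ℕ} (j : Fin d) (q : (Fin d → ℝ) × (Fin d → ℝ)) :
    (swapPair {j} q).1 = Function.update q.1 j (q.2 j) := by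
  funext i
  by_cases h : i = j <;> simp [swapPair, h]

theorem single_coordinate_swap_density_general {d : ℕ} (j : Fin d)
    (p : (Fin d → ℝ) × (Fin d → ℝ) → ℝ → ℝ)
    (fPair : (Fin d → ℝ) × (Fin d → ℝ) → ℝ) (pY : (Fin d → ℝ) → ℝ → ℝ)
    (hfactor : ∀ q y, p q y = fPair q * pY q.1 y)
    (hswap : ∀ q, fPair (swapPair {j} q) = fPair q)
    (x xk : Fin d → ℝ)
    (hnull : ∀ t y : ℝ, pY (Function.update x j t) y = pY x y) :
    ∀ y : ℝ, p (swapPair {j} (x, xk)) y = p (x, xk) y := by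
  intro y
  calc p (swapPair {j} (x, xk)) y
      = fPair (swapPair {j} (x, xk)) * pY (Function.update x j (xk j)) y := by
        rw [hfactor, swapPair_singleton_fst]
    _ = fPair (x, xk) * pY x y := by rw [hswap, hnull]
    _ = p (x, xk) y := (hfactor _ _).symm

/-- Single-coordinate swap density identity: if the positive joint density factors as
p((x, xk), y) = fPair(x, xk) * pY x y (encoding Y ⊥ Xk | X), the pair density is
invariant under swapping coordinate j, and coordinate j is a local null at x (pY does
not depend on x_j), then the joint density is invariant under swapping coordinate j. -/
theorem single_coordinate_swap_density {d : ℕ} (j : Fin d)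
    (p : (Fin d → ℝ) × (Fin d → ℝ) → ℝ → ℝ)
    (fPair : (Fin d → ℝ) × (Fin d → ℝ) → ℝ) (pY : (Fin d → ℝ) → ℝ → ℝ)
    (hppos : ∀ q y, 0 < p q y)
    (hfactor : ∀ q y, p q y = fPair q * pY q.1 y)
    (hswap : ∀ q, fPair (swapPair {j} q) = fPair q)
    (x xk : Fin d → ℝ)
    (hnull : ∀ t y : ℝ, pY (Function.update x j t) y = pY x y) :
    ∀ y : ℝ, p (swapPair {j} (x, xk)) y = p (x, xk) y :=
  single_coordinate_swap_density_general j p fPair pY hfactor hswap x xk hnull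
end
end
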